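/- arXiv:2206.15019 — 4 statements merged into one kernel-verified Lean document; each statement's English description precedes it below -/
import Mathlib

section
/- Let X be a real Hilbert space and K = ℝ^m. Let f ∈ Γ₀(X), g = ⊕_{i=1}^m g_i with g_i ∈ Γ₀(ℝ), and A : X → ℝ^m : x ↦ (A₁x, …, A_mx) with nonzero bounded linear functionals A_i : X → ℝ. Assume S_p := argmin_{x∈X}(f(x) + ∑_{i=1}^m g_i(A_i x)) ≠ ∅ and the qualification condition 0 ∈ sri(dom(g) − A(dom(f))) holds. Define H(x^{(1)},…,x^{(m+1)}) := ∑_{i=1}^m g_i(A_i x^{(i)}) + f(x^{(m+1)}), D := {(x^{(1)},…,x^{(m+1)}) ∈ X^{m+1} : x^{(i)} = x^{(j)} for all i,j} with orthogonal projection P_D, and T_DRSII := (2 prox_H − I) ∘ (2 P_D − I) on X^{m+1}. If S_p is bounded and the set ⋃_{x∈S_p}( [∏_{j=1}^m A_j*(∂g_j(A_j x))] × [∂f(x) ∩ (−∑_{i=1}^m A_i*(∂g_i(A_i x)))] ) is bounded in X^{m+1}, then Fix(T_DRSII) is a bounded subset of X^{m+1}. -/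
noncomputable section

open Filter Topology Bornology
open scoped InnerProductSpace Pointwise Classical

/-- A function with values in the extended reals is *proper* if it is somewhere finite
and nowhere `⊥`. -/
def EProper {H : Type*} (f : H → EReal) : Prop :=
  (∃ x, f x ≠ ⊤) ∧ ∀ x, f x ≠ ⊥

/-- Convexity for extended-real-valued functions. -/
def EConvex {H : Type*} [AddCommGroup H] [Module ℝ H] (f : H → EReal) : Prop :=
  ∀ x y : H, ∀ a b : ℝ, 0 ≤ a → 0 ≤ b → a + b = 1 →
    f (a • x + b • y) ≤ (a : EReal) * f x + (b : EReal) * f y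

/-- The class `Γ₀(H)` of proper lower semicontinuous convex functions `H → (-∞, +∞]`. -/
def Gamma0 {H : Type*} [NormedAddCommGroup H] [NormedSpace ℝ H] (f : H → EReal) : Prop :=
  EProper f ∧ LowerSemicontinuous f ∧ EConvex f

/-- Effective domain `dom f = {x | f x < ∞}`. -/
def edom {H : Type*} (f : H → EReal) : Set H := {x | f x ≠ ⊤}

/-- Set of global minimizers of `f`. -/
def argminSet {H : Type*} (f : H → EReal) : Set H := {x | ∀ y, f x ≤ f y}

/-- Fenchel conjugate `f*(u) = sup_x (⟪x,u⟫ - f x)`. -/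
def econj {H : Type*} [NormedAddCommGroup H] [InnerProductSpace ℝ H]
    (f : H → EReal) (u : H) : EReal :=
  ⨆ x : H, ((⟪x, u⟫_ℝ : EReal) - f x)

/-- Subdifferential `∂f(x) = {u | ∀ y, ⟪y - x, u⟫ + f x ≤ f y}`. -/
def esubdiff {H : Type*} [NormedAddCommGroup H] [InnerProductSpace ℝ H]
    (f : H → EReal) (x : H) : Set H :=
  {u | ∀ y : H, ((⟪y - x, u⟫_ℝ : ℝ) : EReal) + f x ≤ f y}

/-- `p` is the proximal point of `f` at `x`, i.e. a minimizer of
`y ↦ f y + (1/2)‖y - x‖²` (which is unique for `f ∈ Γ₀`). -/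
def IsProxPt {H : Type*} [NormedAddCommGroup H] (f : H → EReal) (x p : H) : Prop :=
  ∀ y : H, f p + ((((1:ℝ)/2) * ‖p - x‖ ^ 2 : ℝ) : EReal)
    ≤ f y + ((((1:ℝ)/2) * ‖y - x‖ ^ 2 : ℝ) : EReal)

/-- Indicator function of a set, with values in the extended reals. -/
def eind {H : Type*} (C : Set H) : H → EReal := fun x => if x ∈ C then 0 else ⊤

/-- Strong relative interior: the points `x ∈ C` such that the cone generated by `C - x`
coincides with the closed linear span of `C - x`. -/
def sriSet {H : Type*} [NormedAddCommGroup H] [NormedSpace ℝ H] (C : Set H) : Set H :=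
  {x | x ∈ C ∧
    {y | ∃ t : ℝ, 0 < t ∧ ∃ c ∈ C, y = t • (c - x)} =
      closure ((Submodule.span ℝ ((fun c => c - x) '' C) : Submodule ℝ H) : Set H)}

/-!
Let `Z` be a fixed point of `T`, `a` the mean of its coordinates and `R = 2 P_D Z - Z`, so that
`R i = 2a - Z i`. The fixed-point equation `Z = 2 prox_H R - R` forces `prox_H R = (a, …, a)`.
Since `H` is separable, `a` is the proximal point of each summand at `R i`, so `R i - a` is a
subgradient of that summand at `a`; for a summand `g_j ∘ A_j` with `A_j ≠ 0` such a subgradient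
is `A_j^* s_j` with `s_j ∈ ∂g_j(A_j a)`. The vectors `R i - a = a - Z i` sum to zero, so `a` is a
minimizer and `R - a` lies in the bounded dual set. Hence `Z = (a, …, a) - (R - a)` stays bounded.
-/

namespace EReal

@[simp, norm_cast]
lemma coe_finset_sum {ι : Type*} (s : Finset ι) (f : ι → ℝ) :
    ((∑ i ∈ s, f i : ℝ) : EReal) = ∑ i ∈ s, (f i : EReal) := by
  induction s using Finset.cons_induction <;> simp [*]

lemma finset_sum_ne_top {ι : Type*} {s : Finset ι} {f : ι → EReal} (h : ∀ i ∈ s, f i ≠ ⊤) :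
    ∑ i ∈ s, f i ≠ ⊤ :=
  Finset.sum_induction f (· ≠ ⊤) (fun _ _ hx hy => (add_lt_top hx hy).ne) zero_ne_top h

lemma finset_sum_ne_bot {ι : Type*} {s : Finset ι} {f : ι → EReal} (h : ∀ i ∈ s, f i ≠ ⊥) :
    ∑ i ∈ s, f i ≠ ⊥ :=
  Finset.sum_induction f (· ≠ ⊥) (fun _ _ hx hy => add_ne_bot_iff.2 ⟨hx, hy⟩) zero_ne_bot h

end EReal

lemma sum_mean_sub_eq_zero {E : Type*} [AddCommGroup E] [Module ℝ E] {n : ℕ}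
    (Z : Fin (n + 1) → E) : ∑ i, (((n:ℝ) + 1)⁻¹ • ∑ j, Z j - Z i) = 0 := by
  simp only [Finset.sum_sub_distrib, Finset.sum_const, Finset.card_univ, Fintype.card_fin,
    ← Nat.cast_smul_eq_nsmul ℝ]
  push_cast
  rw [smul_inv_smul₀ (by positivity), sub_self]

lemma EConvex.comp_linearMap {E F : Type*} [AddCommGroup E] [Module ℝ E] [AddCommGroup F]
    [Module ℝ F] {g : F → EReal} (hg : EConvex g) (A : E →ₗ[ℝ] F) :
    EConvex (fun x => g (A x)) := by
  intro x y a b ha hb hab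
  simpa only [map_add, map_smul] using hg (A x) (A y) a b ha hb hab

lemma EProper.comp_surjective {E F : Type*} {g : F → EReal} (hg : EProper g) {A : E → F}
    (hA : Function.Surjective A) : EProper (fun x => g (A x)) := by
  obtain ⟨⟨y, hy⟩, hbot⟩ := hg
  obtain ⟨x, rfl⟩ := hA y
  exact ⟨⟨x, hy⟩, fun x => hbot (A x)⟩

lemma ContinuousLinearMap.surjective_of_ne_zero {𝕜 X : Type*} [DivisionRing 𝕜] [TopologicalSpace 𝕜]
    [AddCommGroup X] [Module 𝕜 X] [TopologicalSpace X] (A : X →L[𝕜] 𝕜) (hA : A ≠ 0) :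
    Function.Surjective A :=
  LinearMap.surjective (f := (A : X →ₗ[𝕜] 𝕜)) (coe_injective.ne hA)

section Subdifferential

variable {X : Type*} [NormedAddCommGroup X] [InnerProductSpace ℝ X]

lemma zero_mem_esubdiff_iff {φ : X → EReal} {x : X} : 0 ∈ esubdiff φ x ↔ x ∈ argminSet φ := by
  simp [esubdiff, argminSet]

lemma add_mem_esubdiff_add {φ ψ : X → EReal} {x u v : X} (hu : u ∈ esubdiff φ x)
    (hv : v ∈ esubdiff ψ x) : u + v ∈ esubdiff (fun y => φ y + ψ y) x := by
  intro y
  calc ((⟪y - x, u + v⟫_ℝ : ℝ) : EReal) + (φ x + ψ x)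
      = ((⟪y - x, u⟫_ℝ : ℝ) + φ x) + ((⟪y - x, v⟫_ℝ : ℝ) + ψ x) := by
        rw [inner_add_right, EReal.coe_add]; ac_rfl
    _ ≤ φ y + ψ y := add_le_add (hu y) (hv y)

lemma sum_mem_esubdiff_sum {ι : Type*} (s : Finset ι) {φ : ι → X → EReal} {x : X} {u : ι → X}
    (h : ∀ i ∈ s, u i ∈ esubdiff (φ i) x) :
    ∑ i ∈ s, u i ∈ esubdiff (fun y => ∑ i ∈ s, φ i y) x := by
  induction s using Finset.cons_induction with
  | empty => intro y; simp
  | cons i s hi ih =>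
    simp only [Finset.sum_cons]
    exact add_mem_esubdiff_add (h i (Finset.mem_cons_self i s))
      (ih fun j hj => h j (Finset.mem_cons_of_mem hj))

lemma ne_top_of_mem_esubdiff {φ : X → EReal} {x u : X} (hu : u ∈ esubdiff φ x)
    (hφ : ∃ y, φ y ≠ ⊤) : φ x ≠ ⊤ := by
  obtain ⟨y, hy⟩ := hφ
  intro hx
  simpa [hx] using (hu y).trans_lt hy.lt_top

lemma adjoint_mem_esubdiff_comp [CompleteSpace X] {Y : Type*} [NormedAddCommGroup Y]
    [InnerProductSpace ℝ Y] [CompleteSpace Y] {g : Y → EReal} (A : X →L[ℝ] Y) {x : X} {s : Y}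
    (hs : s ∈ esubdiff g (A x)) : A.adjoint s ∈ esubdiff (fun y => g (A y)) x := by
  intro y
  simpa [ContinuousLinearMap.adjoint_inner_right, map_sub] using hs (A y)

lemma mem_argminSet_add_sum_comp [CompleteSpace X] {ι : Type*} [Fintype ι] {Y : Type*}
    [NormedAddCommGroup Y] [InnerProductSpace ℝ Y] [CompleteSpace Y] {f : X → EReal}
    {g : ι → Y → EReal} {A : ι → X →L[ℝ] Y} {x : X} {s : ι → Y}
    (hs : ∀ i, s i ∈ esubdiff (g i) (A i x)) (hf : -∑ i, (A i).adjoint (s i) ∈ esubdiff f x) :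
    x ∈ argminSet (fun y => f y + ∑ i, g i (A i y)) := by
  rw [← zero_mem_esubdiff_iff]
  simpa using add_mem_esubdiff_add hf
    (sum_mem_esubdiff_sum Finset.univ fun i _ => adjoint_mem_esubdiff_comp (A i) (hs i))

lemma esubdiff_comp_subset_adjoint_image [CompleteSpace X] {g : ℝ → EReal} (hg : EProper g)
    {A : X →L[ℝ] ℝ} (hA : A ≠ 0) (x : X) :
    esubdiff (fun y => g (A y)) x ⊆ A.adjoint '' esubdiff g (A x) := by
  intro u hu
  have hsurj := A.surjective_of_ne_zero hA
  obtain ⟨r, hr⟩ : ∃ r : ℝ, g (A x) = r :=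
    ⟨_, (EReal.coe_toReal (ne_top_of_mem_esubdiff hu (hg.comp_surjective hsurj).1)
      (hg.2 _)).symm⟩
  set v := A.adjoint 1
  have hv : ∀ y, ⟪v, y⟫_ℝ = A y := fun y => by
    simp [v, real_inner_comm, ContinuousLinearMap.adjoint_inner_right]
  -- `u` is orthogonal to `ker A = (ℝ ∙ v)ᗮ`, hence lies on the line `ℝ ∙ v = range A†`
  have hu_ker : ∀ y, A y = 0 → ⟪y, u⟫_ℝ = 0 := fun y hy => by
    have h₁ := hu (x + y)
    have h₂ := hu (x - y)
    simp only [map_add, map_sub, hy, add_zero, sub_zero, hr, add_sub_cancel_left,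
      sub_sub_cancel_left, inner_neg_left, ← EReal.coe_add, EReal.coe_le_coe_iff] at h₁ h₂
    linarith
  have hu_span : u ∈ (ℝ ∙ v) := by
    rw [← Submodule.orthogonal_orthogonal (ℝ ∙ v), Submodule.mem_orthogonal]
    intro y hy
    rw [Submodule.mem_orthogonal_singleton_iff_inner_right, hv] at hy
    exact hu_ker y hy
  obtain ⟨s, rfl⟩ := Submodule.mem_span_singleton.1 hu_span
  have hs : s • v = A.adjoint s := by simp [v, ← map_smul]
  refine ⟨s, fun t => ?_, hs.symm⟩
  obtain ⟨y, rfl⟩ := hsurj t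
  simpa [hs, ContinuousLinearMap.adjoint_inner_right, map_sub] using hu y

end Subdifferential

section Prox

variable {X : Type*} [NormedAddCommGroup X]

lemma IsProxPt.ne_top {φ : X → EReal} (hφ : EProper φ) {z p : X} (h : IsProxPt φ z p) :
    φ p ≠ ⊤ := by
  obtain ⟨y, hy⟩ := hφ.1
  intro hp
  have := (h y).trans_lt (EReal.add_lt_top hy (EReal.coe_ne_top _))
  rw [hp, EReal.top_add_of_ne_bot (EReal.coe_ne_bot _)] at this
  exact lt_irrefl _ this

lemma isProxPt_of_sum_le {ι : Type*} [Fintype ι] [DecidableEq ι] {φ : ι → X → EReal}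
    (hφ : ∀ i, EProper (φ i)) {R P : ι → X}
    (hP : ∀ W : ι → X, (∑ i, φ i (P i)) + ((((1:ℝ)/2) * ∑ i, ‖P i - R i‖ ^ 2 : ℝ) : EReal)
        ≤ (∑ i, φ i (W i)) + ((((1:ℝ)/2) * ∑ i, ‖W i - R i‖ ^ 2 : ℝ) : EReal)) (i : ι) :
    IsProxPt (φ i) (R i) (P i) := by
  set q : ι → X → EReal := fun j w => φ j w + ((((1:ℝ)/2) * ‖w - R j‖ ^ 2 : ℝ) : EReal)
  have hq : ∀ W : ι → X, ∑ j, q j (P j) ≤ ∑ j, q j (W j) := fun W => by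
    simpa only [q, Finset.sum_add_distrib, Finset.mul_sum, EReal.coe_finset_sum] using hP W
  have hq_bot : ∀ j w, q j w ≠ ⊥ := fun j w =>
    EReal.add_ne_bot_iff.2 ⟨(hφ j).2 w, EReal.coe_ne_bot _⟩
  have hq_top : ∑ j, q j (P j) ≠ ⊤ := by
    choose W hW using fun j => (hφ j).1
    exact ne_top_of_le_ne_top
      (EReal.finset_sum_ne_top fun j _ => (EReal.add_lt_top (hW j) (EReal.coe_ne_top _)).ne)
      (hq W)
  intro w
  have hsplit : ∀ W : ι → X, ∑ j, q j (W j) = q i (W i) + ∑ j ∈ Finset.univ.erase i, q j (W j) :=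
    fun W => (Finset.add_sum_erase _ (fun j => q j (W j)) (Finset.mem_univ i)).symm
  have hupd := hq (Function.update P i w)
  have hrest : ∑ j ∈ Finset.univ.erase i, q j (Function.update P i w j)
      = ∑ j ∈ Finset.univ.erase i, q j (P j) :=
    Finset.sum_congr rfl fun j hj => by rw [Function.update_of_ne (Finset.ne_of_mem_erase hj)]
  rw [hsplit, hsplit, Function.update_self, hrest] at hupd
  rw [hsplit] at hq_top
  have hS_top : ∑ j ∈ Finset.univ.erase i, q j (P j) ≠ ⊤ := fun h =>
    hq_top (by rw [h, EReal.add_top_of_ne_bot (hq_bot i (P i))])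
  obtain ⟨s, hs⟩ : ∃ s : ℝ, ∑ j ∈ Finset.univ.erase i, q j (P j) = s :=
    ⟨_, (EReal.coe_toReal hS_top (EReal.finset_sum_ne_bot fun j _ => hq_bot j (P j))).symm⟩
  rw [hs] at hupd
  exact (EReal.addLECancellable_coe s).add_le_add_iff_right.1 hupd

variable [InnerProductSpace ℝ X]

lemma IsProxPt.sub_mem_esubdiff {φ : X → EReal} (hφ : EProper φ) (hconv : EConvex φ) {z p : X}
    (h : IsProxPt φ z p) : z - p ∈ esubdiff φ p := by
  obtain ⟨r, hr⟩ : ∃ r : ℝ, φ p = r := ⟨_, (EReal.coe_toReal (h.ne_top hφ) (hφ.2 p)).symm⟩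
  intro y
  rcases eq_or_ne (φ y) ⊤ with hy | hy
  · simp [hy]
  obtain ⟨G, hG⟩ : ∃ G : ℝ, φ y = G := ⟨_, (EReal.coe_toReal hy (hφ.2 y)).symm⟩
  rw [hr, hG, ← EReal.coe_add, EReal.coe_le_coe_iff]
  -- compare `p` with the points `p + t • (y - p)` of the segment towards `y`
  have key : ∀ t ∈ Set.Ioo (0 : ℝ) 1, ⟪y - p, z - p⟫_ℝ + r ≤ G + t / 2 * ‖y - p‖ ^ 2 := by
    rintro t ⟨ht0, ht1⟩
    have hconv_t := hconv p y (1 - t) t (by linarith) ht0.le (by ring)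
    rw [hr, hG, ← EReal.coe_mul, ← EReal.coe_mul, ← EReal.coe_add] at hconv_t
    have hprox_t := (h _).trans (add_le_add_left hconv_t _)
    rw [hr, ← EReal.coe_add, ← EReal.coe_add, EReal.coe_le_coe_iff,
      show (1 - t) • p + t • y - z = (p - z) + t • (y - p) by module, norm_add_sq_real,
      inner_smul_right, norm_smul, Real.norm_of_nonneg ht0.le] at hprox_t
    have hinner : ⟪p - z, y - p⟫_ℝ = -⟪y - p, z - p⟫_ℝ := by
      rw [real_inner_comm, ← inner_neg_right, neg_sub]
    rw [hinner] at hprox_t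
    refine le_of_mul_le_mul_left ?_ ht0
    nlinarith
  have hlim : Tendsto (fun t : ℝ => G + t / 2 * ‖y - p‖ ^ 2) (𝓝[>] 0) (𝓝 G) := by
    have : Continuous fun t : ℝ => G + t / 2 * ‖y - p‖ ^ 2 := by fun_prop
    simpa using (this.tendsto 0).mono_left nhdsWithin_le_nhds
  exact ge_of_tendsto hlim (Filter.mem_of_superset (Ioo_mem_nhdsGT one_pos) key)

end Prox

theorem statement15_general
    {X : Type*} [NormedAddCommGroup X] [InnerProductSpace ℝ X] [CompleteSpace X]
    {m : ℕ}
    (f : X → EReal) (hf : Gamma0 f)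
    (gs : Fin m → ℝ → EReal) (hgs : ∀ i, Gamma0 (gs i))
    (A : Fin m → (X →L[ℝ] ℝ)) (hA : ∀ i, A i ≠ 0)
    (Sp : Set X) (hSpdef : Sp = argminSet (fun x => f x + ∑ i, gs i (A i x)))
    (hbSp : IsBounded Sp)
    (hbset : IsBounded {Z : Fin (m + 1) → X | ∃ x ∈ Sp,
      (∀ j : Fin m, Z j.castSucc ∈ (A j).adjoint '' esubdiff (gs j) (A j x)) ∧
      Z (Fin.last m) ∈ esubdiff f x ∧
      ∃ s : Fin m → ℝ, (∀ i, s i ∈ esubdiff (gs i) (A i x)) ∧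
        Z (Fin.last m) = -∑ i, (A i).adjoint (s i)})
    (Hf : (Fin (m + 1) → X) → EReal)
    (hHf : ∀ Z, Hf Z = (∑ i : Fin m, gs i (A i (Z i.castSucc))) + f (Z (Fin.last m)))
    (proxH : (Fin (m + 1) → X) → (Fin (m + 1) → X))
    (hproxH : ∀ Z W : Fin (m + 1) → X,
      Hf (proxH Z) + ((((1:ℝ)/2) * ∑ i, ‖proxH Z i - Z i‖ ^ 2 : ℝ) : EReal)
        ≤ Hf W + ((((1:ℝ)/2) * ∑ i, ‖W i - Z i‖ ^ 2 : ℝ) : EReal))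
    (T : (Fin (m + 1) → X) → (Fin (m + 1) → X))
    (hT : ∀ Z, T Z =
      (2:ℝ) • proxH (fun i => (2:ℝ) • (((m:ℝ) + 1)⁻¹ • ∑ j, Z j) - Z i)
        - (fun i => (2:ℝ) • (((m:ℝ) + 1)⁻¹ • ∑ j, Z j) - Z i)) :
    IsBounded {Z : Fin (m + 1) → X | T Z = Z} := by
  refine (isBounded_sub (IsBounded.pi fun _ => hbSp) hbset).subset fun Z hZ => ?_
  set a : X := ((m:ℝ) + 1)⁻¹ • ∑ j, Z j
  set R : Fin (m + 1) → X := fun i => (2:ℝ) • a - Z i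
  have hprox : proxH R = fun _ => a := funext fun i => by
    have hfix : (2:ℝ) • proxH R - R = Z := (hT Z).symm.trans hZ
    have hZi := congrFun hfix i
    simp only [Pi.sub_apply, Pi.smul_apply, R] at hZi
    apply smul_right_injective X (two_ne_zero (α := ℝ))
    linear_combination (norm := module) hZi
  set φ : Fin (m + 1) → X → EReal :=
    Fin.snoc (α := fun _ => X → EReal) (fun j x => gs j (A j x)) f
  have hφ : ∀ i, EProper (φ i) ∧ EConvex (φ i) :=
    Fin.lastCases (by simpa [φ] using ⟨hf.1, hf.2.2⟩) fun j => by
      simpa [φ] using ⟨(hgs j).1.comp_surjective ((A j).surjective_of_ne_zero (hA j)),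
        (hgs j).2.2.comp_linearMap (A j : X →ₗ[ℝ] ℝ)⟩
  have hsub : ∀ i, R i - a ∈ esubdiff (φ i) a := fun i => by
    have hprox_i := isProxPt_of_sum_le (fun i => (hφ i).1) (P := fun _ => a) (R := R)
      (by simpa [hHf, hprox, φ, Fin.sum_univ_castSucc] using hproxH R) i
    exact hprox_i.sub_mem_esubdiff (hφ i).1 (hφ i).2
  have hsub_last : R (Fin.last m) - a ∈ esubdiff f a := by simpa [φ] using hsub (Fin.last m)
  choose s hs hsR using fun j : Fin m =>
    esubdiff_comp_subset_adjoint_image (hgs j).1 (hA j) a (by simpa [φ] using hsub j.castSucc)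
  have hlast : R (Fin.last m) - a = -∑ j, (A j).adjoint (s j) := by
    have hsum : ∑ i, (R i - a) = 0 := by
      rw [← sum_mean_sub_eq_zero Z]
      exact Finset.sum_congr rfl fun i _ => by simp only [R]; module
    rw [Fin.sum_univ_castSucc, ← Finset.sum_congr rfl fun j _ => hsR j] at hsum
    exact eq_neg_of_add_eq_zero_right hsum
  have haSp : a ∈ Sp := hSpdef ▸ mem_argminSet_add_sum_comp hs (hlast ▸ hsub_last)
  refine ⟨fun _ => a, Set.mem_univ_pi.2 fun _ => haSp, fun i => R i - a,
    ⟨a, haSp, fun j => ⟨s j, hs j, hsR j⟩, hsub_last, s, hs, hlast⟩, ?_⟩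
  funext i
  simp only [Pi.sub_apply, R]
  module

/-- Theorem 5(c): boundedness of `Fix T_DRSII`.
If `S_p` and `⋃_{x ∈ S_p} ([∏_j A_j*(∂g_j(A_j x))] × [∂f(x) ∩ (-∑_i A_i*(∂g_i(A_i x)))])`
are bounded, then the fixed point set of the DRS operator of Type-II is bounded. -/
theorem statement15
    {X : Type*} [NormedAddCommGroup X] [InnerProductSpace ℝ X] [CompleteSpace X]
    {m : ℕ}
    (f : X → EReal) (hf : Gamma0 f)
    (gs : Fin m → ℝ → EReal) (hgs : ∀ i, Gamma0 (gs i))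
    (A : Fin m → (X →L[ℝ] ℝ)) (hA : ∀ i, A i ≠ 0)
    (Sp : Set X) (hSpdef : Sp = argminSet (fun x => f x + ∑ i, gs i (A i x)))
    (hSp : Sp.Nonempty)
    (hqc : (0 : Fin m → ℝ) ∈ sriSet
      (edom (fun y : Fin m → ℝ => ∑ i, gs i (y i)) - (fun x => fun i => A i x) '' edom f))
    (hbSp : IsBounded Sp)
    (hbset : IsBounded {Z : Fin (m + 1) → X | ∃ x ∈ Sp,
      (∀ j : Fin m, Z j.castSucc ∈ (A j).adjoint '' esubdiff (gs j) (A j x)) ∧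
      Z (Fin.last m) ∈ esubdiff f x ∧
      ∃ s : Fin m → ℝ, (∀ i, s i ∈ esubdiff (gs i) (A i x)) ∧
        Z (Fin.last m) = -∑ i, (A i).adjoint (s i)})
    (Hf : (Fin (m + 1) → X) → EReal)
    (hHf : ∀ Z, Hf Z = (∑ i : Fin m, gs i (A i (Z i.castSucc))) + f (Z (Fin.last m)))
    (proxH : (Fin (m + 1) → X) → (Fin (m + 1) → X))
    (hproxH : ∀ Z W : Fin (m + 1) → X,
      Hf (proxH Z) + ((((1:ℝ)/2) * ∑ i, ‖proxH Z i - Z i‖ ^ 2 : ℝ) : EReal)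
        ≤ Hf W + ((((1:ℝ)/2) * ∑ i, ‖W i - Z i‖ ^ 2 : ℝ) : EReal))
    (T : (Fin (m + 1) → X) → (Fin (m + 1) → X))
    (hT : ∀ Z, T Z =
      (2:ℝ) • proxH (fun i => (2:ℝ) • (((m:ℝ) + 1)⁻¹ • ∑ j, Z j) - Z i)
        - (fun i => (2:ℝ) • (((m:ℝ) + 1)⁻¹ • ∑ j, Z j) - Z i)) :
    IsBounded {Z : Fin (m + 1) → X | T Z = Z} :=
  statement15_general f hf gs hgs A hA Sp hSpdef hbSp hbset Hf hHf proxH hproxH T hT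
end
end

section
/- Let X and K be real Hilbert spaces, f ∈ Γ₀(X), g ∈ Γ₀(K), and A : X → K a bounded linear operator such that S_p := argmin_{x∈X}(f(x) + g(Ax)) ≠ ∅, the qualification condition 0 ∈ sri(dom(g) − A(dom(f))) holds, and ‖Ǎ‖_op ≤ 1/u for some u > 0, where Ǎ : X × K → K : (x,y) ↦ Ax − y. Suppose the three sets S_p, ∂f(S_p) := ⋃_{x∈S_p} ∂f(x), and {ν ∈ K : −A*ν ∈ ∂f(S_p)} ∩ ∂g(K) are bounded, where ∂g(K) := ⋃_{y∈K} ∂g(y). Then both (i) the fixed point set of T_DRSI := (2 prox_F − I) ∘ (2 P_{N(Ǎ)} − I) on X × K (with F(x,y) := f(x)+g(y) and N(Ǎ) := {(x,Ax) : x ∈ X}) is bounded, and (ii) the fixed point set of T_LAL : X × K × K → X × K × K : (x,y,ν) ↦ (x_T, y_T, ν_T), where x_T := prox_f(x − u²(A*Ax − A*y) + u A*ν), y_T := prox_g(y − u²(−Ax + y) − u ν), ν_T := ν − u(A x_T − y_T), is bounded. -/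
noncomputable section

open Filter Topology Bornology
open scoped InnerProductSpace Pointwise Classical

/-!
Both fixed-point sets are images of the set of KKT pairs `(x, ν)`, i.e. `-A*ν ∈ ∂f(x)` and
`ν ∈ ∂g(Ax)`, under bounded linear maps: a fixed point `z` of the Douglas–Rachford operator is
`(x + A*ν, Ax - ν)` with `x = (P z).1`, `ν = (P z).2 - z.2`, and a fixed point of the LAL operator
is `(x, Ax, -ν/u)`. The prox identities `prox_f(w) = p ⇒ w - p ∈ ∂f(p)` produce the KKT
conditions, which make `x` a minimizer (the two subgradient inequalities add up with the inner
products cancelling). Hence `x ∈ S_p` and `ν` lies in the bounded dual set.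
-/

lemma eq_of_eq_two_smul_sub {E : Type*} [AddCommGroup E] [Module ℝ E] {x p q : E}
    (h : x = (2 : ℝ) • q - ((2 : ℝ) • p - x)) : q = p := by
  have h2 : (2 : ℝ) • (q - p) = 0 := by linear_combination (norm := module) -h
  exact sub_eq_zero.mp ((smul_eq_zero.mp h2).resolve_left two_ne_zero)

lemma IsProxPt.ne_top_s16 {H : Type*} [NormedAddCommGroup H] {f : H → EReal} (hf : EProper f)
    {x p : H} (h : IsProxPt f x p) : f p ≠ ⊤ := by
  obtain ⟨⟨y, hy⟩, hbot⟩ := hf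
  intro htop
  have hle := h y
  rw [htop, EReal.top_add_of_ne_bot (EReal.coe_ne_bot _), top_le_iff,
    ← EReal.coe_toReal hy (hbot y), ← EReal.coe_add] at hle
  exact EReal.coe_ne_top _ hle

section ConvexAnalysis

variable {H : Type*} [NormedAddCommGroup H] [InnerProductSpace ℝ H]

lemma IsProxPt.le_add_inner_add_mul {f : H → EReal} (hf : EConvex f) {x p y : H} {a b : ℝ}
    (ha : f p = a) (hb : f y = b) (h : IsProxPt f x p) {t : ℝ} (ht₀ : 0 < t) (ht₁ : t ≤ 1) :
    a ≤ b + ⟪p - x, y - p⟫_ℝ + t * (‖y - p‖ ^ 2 / 2) := by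
  have hconv := hf p y (1 - t) t (by linarith) ht₀.le (by ring)
  have hprox := h ((1 - t) • p + t • y)
  rw [ha, hb, ← EReal.coe_mul, ← EReal.coe_mul, ← EReal.coe_add] at hconv
  have hsum := hprox.trans (add_le_add_left hconv _)
  rw [ha, ← EReal.coe_add, ← EReal.coe_add, EReal.coe_le_coe_iff] at hsum
  have hexp : ‖(1 - t) • p + t • y - x‖ ^ 2
      = ‖p - x‖ ^ 2 + 2 * (t * ⟪p - x, y - p⟫_ℝ) + t ^ 2 * ‖y - p‖ ^ 2 := by
    rw [show (1 - t) • p + t • y - x = (p - x) + t • (y - p) by module, norm_add_sq_real,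
      real_inner_smul_right, norm_smul, Real.norm_eq_abs, mul_pow, sq_abs]
  rw [hexp] at hsum
  nlinarith

lemma IsProxPt.sub_mem_esubdiff_s16 {f : H → EReal} (hfp : EProper f) (hfc : EConvex f) {x p : H}
    (h : IsProxPt f x p) : x - p ∈ esubdiff f p := by
  intro y
  by_cases hy : f y = ⊤
  · rw [hy]; exact le_top
  rw [← EReal.coe_toReal (h.ne_top_s16 hfp) (hfp.2 p), ← EReal.coe_toReal hy (hfp.2 y),
    ← EReal.coe_add, EReal.coe_le_coe_iff]
  have hlim : Tendsto (fun t : ℝ => (f y).toReal + ⟪p - x, y - p⟫_ℝ + t * (‖y - p‖ ^ 2 / 2))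
      (𝓝[>] 0) (𝓝 ((f y).toReal + ⟪p - x, y - p⟫_ℝ)) :=
    tendsto_nhdsWithin_of_tendsto_nhds <| by
      simpa using tendsto_const_nhds.add ((tendsto_id (x := 𝓝 (0 : ℝ))).mul_const _)
  have hle := ge_of_tendsto hlim (eventually_of_mem (Ioc_mem_nhdsGT one_pos) fun t ht =>
    h.le_add_inner_add_mul hfc (EReal.coe_toReal (h.ne_top_s16 hfp) (hfp.2 p)).symm
      (EReal.coe_toReal hy (hfp.2 y)).symm ht.1 ht.2)
  rw [← neg_sub x p, inner_neg_left, real_inner_comm] at hle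
  linarith

end ConvexAnalysis

lemma inner_add_inner_eq_zero_of_forall_le {E F : Type*}
    [NormedAddCommGroup E] [InnerProductSpace ℝ E] [NormedAddCommGroup F] [InnerProductSpace ℝ F]
    {a v : E} {b w : F}
    (h : ∀ t : ℝ, ‖a‖ ^ 2 + ‖b‖ ^ 2 ≤ ‖a - t • v‖ ^ 2 + ‖b - t • w‖ ^ 2) :
    ⟪a, v⟫_ℝ + ⟪b, w⟫_ℝ = 0 := by
  have hquad : ∀ t : ℝ,
      0 ≤ (‖v‖ ^ 2 + ‖w‖ ^ 2) * (t * t) + (-2 * (⟪a, v⟫_ℝ + ⟪b, w⟫_ℝ)) * t + 0 := by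
    intro t
    have ht := h t
    rw [norm_sub_sq_real, norm_sub_sq_real, real_inner_smul_right, real_inner_smul_right,
      norm_smul, norm_smul, Real.norm_eq_abs, mul_pow, mul_pow, sq_abs] at ht
    nlinarith
  have hdisc := discrim_le_zero hquad
  rw [discrim] at hdisc
  nlinarith [sq_nonneg (⟪a, v⟫_ℝ + ⟪b, w⟫_ℝ)]

section GraphProblem

variable {X K : Type*} [NormedAddCommGroup X] [InnerProductSpace ℝ X] [CompleteSpace X]
  [NormedAddCommGroup K] [InnerProductSpace ℝ K] [CompleteSpace K]

lemma sub_add_adjoint_sub_eq_zero_of_forall_le {A : X →L[ℝ] K} {z p : X × K}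
    (hp : A p.1 = p.2)
    (hmin : ∀ w : X × K, A w.1 = w.2 →
      ‖z.1 - p.1‖ ^ 2 + ‖z.2 - p.2‖ ^ 2 ≤ ‖z.1 - w.1‖ ^ 2 + ‖z.2 - w.2‖ ^ 2) :
    z.1 - p.1 + A.adjoint (z.2 - p.2) = 0 := by
  have horth : ∀ v : X, ⟪z.1 - p.1 + A.adjoint (z.2 - p.2), v⟫_ℝ = 0 := by
    intro v
    rw [inner_add_left, ContinuousLinearMap.adjoint_inner_left]
    refine inner_add_inner_eq_zero_of_forall_le fun t => ?_
    simpa only [sub_add_eq_sub_sub] using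
      hmin (p.1 + t • v, p.2 + t • A v) (by simp [hp])
  exact inner_self_eq_zero.mp (horth _)

def IsKKTPair (f : X → EReal) (g : K → EReal) (A : X →L[ℝ] K) (x : X) (ν : K) : Prop :=
  -(A.adjoint ν) ∈ esubdiff f x ∧ ν ∈ esubdiff g (A x)

lemma IsKKTPair.mem_argminSet {f : X → EReal} {g : K → EReal} {A : X →L[ℝ] K} {x : X} {ν : K}
    (h : IsKKTPair f g A x ν) : x ∈ argminSet fun x => f x + g (A x) := by
  intro y
  have hcancel : ⟪y - x, -(A.adjoint ν)⟫_ℝ + ⟪A y - A x, ν⟫_ℝ = 0 := by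
    rw [inner_neg_right, ContinuousLinearMap.adjoint_inner_right, map_sub, neg_add_eq_zero,
      real_inner_comm]
  calc f x + g (A x)
      = ((⟪y - x, -(A.adjoint ν)⟫_ℝ + ⟪A y - A x, ν⟫_ℝ : ℝ) : EReal) + (f x + g (A x)) := by
        rw [hcancel, EReal.coe_zero, zero_add]
    _ = (⟪y - x, -(A.adjoint ν)⟫_ℝ + f x) + (⟪A y - A x, ν⟫_ℝ + g (A x)) := by
        rw [EReal.coe_add, add_add_add_comm]
    _ ≤ f y + g (A y) := add_le_add (h.1 y) (h.2 (A y))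

lemma isBounded_setOf_isKKTPair {f : X → EReal} {g : K → EReal} {A : X →L[ℝ] K}
    (hprimal : IsBounded (argminSet fun x => f x + g (A x)))
    (hdual : IsBounded ({ν : K | -(A.adjoint ν) ∈ ⋃ x ∈ argminSet (fun x => f x + g (A x)),
      esubdiff f x} ∩ ⋃ y : K, esubdiff g y)) :
    IsBounded {q : X × K | IsKKTPair f g A q.1 q.2} :=
  (hprimal.prod hdual).subset fun _ hq =>
    ⟨hq.mem_argminSet, Set.mem_biUnion hq.mem_argminSet hq.1, Set.mem_iUnion.mpr ⟨_, hq.2⟩⟩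

def kktToDrsFix (A : X →L[ℝ] K) : X × K →L[ℝ] X × K :=
  (ContinuousLinearMap.fst ℝ X K + A.adjoint ∘L ContinuousLinearMap.snd ℝ X K).prod
    (A ∘L ContinuousLinearMap.fst ℝ X K - ContinuousLinearMap.snd ℝ X K)

def kktToLalFix (A : X →L[ℝ] K) (u : ℝ) : X × K →L[ℝ] X × K × K :=
  (ContinuousLinearMap.fst ℝ X K).prod
    ((A ∘L ContinuousLinearMap.fst ℝ X K).prod (-u⁻¹ • ContinuousLinearMap.snd ℝ X K))

end GraphProblem

section FixedPoints

variable {X K : Type*} [NormedAddCommGroup X] [InnerProductSpace ℝ X] [CompleteSpace X]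
  [NormedAddCommGroup K] [InnerProductSpace ℝ K] [CompleteSpace K]
  {f : X → EReal} {g : K → EReal} {proxf : X → X} {proxg : K → K} {A : X →L[ℝ] K}

lemma mem_image_kktToDrsFix (hfp : EProper f) (hfc : EConvex f) (hgp : EProper g)
    (hgc : EConvex g) (hproxf : ∀ x, IsProxPt f x (proxf x))
    (hproxg : ∀ y, IsProxPt g y (proxg y)) {z p : X × K} (hp : A p.1 = p.2)
    (hpz : z.1 - p.1 + A.adjoint (z.2 - p.2) = 0)
    (hz : z = ((2 : ℝ) • proxf ((2 : ℝ) • p - z).1 - ((2 : ℝ) • p - z).1,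
      (2 : ℝ) • proxg ((2 : ℝ) • p - z).2 - ((2 : ℝ) • p - z).2)) :
    z ∈ kktToDrsFix A '' {q | IsKKTPair f g A q.1 q.2} := by
  have h1 : proxf ((2 : ℝ) • p.1 - z.1) = p.1 := eq_of_eq_two_smul_sub (congrArg Prod.fst hz)
  have h2 : proxg ((2 : ℝ) • p.2 - z.2) = p.2 := eq_of_eq_two_smul_sub (congrArg Prod.snd hz)
  have hf := (hproxf ((2 : ℝ) • p.1 - z.1)).sub_mem_esubdiff_s16 hfp hfc
  have hg := (hproxg ((2 : ℝ) • p.2 - z.2)).sub_mem_esubdiff_s16 hgp hgc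
  rw [h1, show (2 : ℝ) • p.1 - z.1 - p.1 = p.1 - z.1 by module] at hf
  rw [h2, show (2 : ℝ) • p.2 - z.2 - p.2 = p.2 - z.2 by module] at hg
  have hdual : -A.adjoint (p.2 - z.2) = p.1 - z.1 := by
    rw [← map_neg, neg_sub, eq_neg_of_add_eq_zero_right hpz, neg_sub]
  refine ⟨(p.1, p.2 - z.2), ⟨hdual ▸ hf, hp ▸ hg⟩, Prod.ext ?_ ?_⟩
  · change p.1 + A.adjoint (p.2 - z.2) = z.1
    rw [← neg_neg (A.adjoint _), hdual]; abel
  · change A p.1 - (p.2 - z.2) = z.2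
    rw [hp]; abel

lemma mem_image_kktToLalFix (hfp : EProper f) (hfc : EConvex f) (hgp : EProper g)
    (hgc : EConvex g) (hproxf : ∀ x, IsProxPt f x (proxf x))
    (hproxg : ∀ y, IsProxPt g y (proxg y)) {u : ℝ} (hu : u ≠ 0) {x : X} {y ν : K}
    (hfix : (x, y, ν) =
      (proxf (x - (u ^ 2) • (A.adjoint (A x) - A.adjoint y) + u • A.adjoint ν),
       proxg (y - (u ^ 2) • (-(A x) + y) - u • ν),
       ν - u • (A (proxf (x - (u ^ 2) • (A.adjoint (A x) - A.adjoint y) + u • A.adjoint ν))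
                 - proxg (y - (u ^ 2) • (-(A x) + y) - u • ν)))) :
    (x, y, ν) ∈ kktToLalFix A u '' {q | IsKKTPair f g A q.1 q.2} := by
  simp only [Prod.mk.injEq] at hfix
  obtain ⟨hx, hy, hν⟩ := hfix
  rw [← hx, ← hy, eq_comm, sub_eq_self, smul_eq_zero, sub_eq_zero] at hν
  have hAx : A x = y := hν.resolve_left hu
  simp only [hAx, sub_self, neg_add_cancel, smul_zero, sub_zero] at hx hy
  have hf := (hproxf (x + u • A.adjoint ν)).sub_mem_esubdiff_s16 hfp hfc
  have hg := (hproxg (y - u • ν)).sub_mem_esubdiff_s16 hgp hgc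
  rw [← hx, add_sub_cancel_left] at hf
  rw [← hy, sub_sub_cancel_left] at hg
  refine ⟨(x, -(u • ν)), ⟨by simpa using hf, hAx ▸ hg⟩, ?_⟩
  simp [kktToLalFix, hAx, smul_smul, hu]

end FixedPoints

theorem statement16_general
    {X K : Type*} [NormedAddCommGroup X] [InnerProductSpace ℝ X] [CompleteSpace X]
    [NormedAddCommGroup K] [InnerProductSpace ℝ K] [CompleteSpace K]
    (f : X → EReal) (g : K → EReal) (hf : Gamma0 f) (hg : Gamma0 g)
    (A : X →L[ℝ] K)
    (Sp : Set X) (hSpdef : Sp = argminSet (fun x => f x + g (A x)))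
    (u : ℝ) (hu : 0 < u)
    (hbSp : IsBounded Sp)
    (hbdual : IsBounded
      ({ν : K | -(A.adjoint ν) ∈ ⋃ x ∈ Sp, esubdiff f x} ∩ ⋃ y : K, esubdiff g y))
    (proxf : X → X) (proxg : K → K)
    (hproxf : ∀ x, IsProxPt f x (proxf x)) (hproxg : ∀ y, IsProxPt g y (proxg y))
    (P : X × K → X × K)
    (hPmem : ∀ z : X × K, A (P z).1 = (P z).2)
    (hPmin : ∀ z w : X × K, A w.1 = w.2 →
      ‖z.1 - (P z).1‖ ^ 2 + ‖z.2 - (P z).2‖ ^ 2 ≤ ‖z.1 - w.1‖ ^ 2 + ‖z.2 - w.2‖ ^ 2)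
    (Tdrs : X × K → X × K)
    (hTdrs : ∀ z : X × K, Tdrs z =
      ((2:ℝ) • proxf ((2:ℝ) • P z - z).1 - ((2:ℝ) • P z - z).1,
       (2:ℝ) • proxg ((2:ℝ) • P z - z).2 - ((2:ℝ) • P z - z).2))
    (Tlal : X × K × K → X × K × K)
    (hTlal : ∀ (x : X) (y ν : K), Tlal (x, y, ν) =
      (proxf (x - (u ^ 2) • (A.adjoint (A x) - A.adjoint y) + u • A.adjoint ν),
       proxg (y - (u ^ 2) • (-(A x) + y) - u • ν),
       ν - u • (A (proxf (x - (u ^ 2) • (A.adjoint (A x) - A.adjoint y) + u • A.adjoint ν))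
                 - proxg (y - (u ^ 2) • (-(A x) + y) - u • ν)))) :
    IsBounded {z : X × K | Tdrs z = z} ∧ IsBounded {w : X × K × K | Tlal w = w} := by
  subst hSpdef
  have hkkt := isBounded_setOf_isKKTPair hbSp hbdual
  refine ⟨((kktToDrsFix A).lipschitz.isBounded_image hkkt).subset fun z hz => ?_,
    ((kktToLalFix A u).lipschitz.isBounded_image hkkt).subset ?_⟩
  · exact mem_image_kktToDrsFix hf.1 hf.2.2 hg.1 hg.2.2 hproxf hproxg (hPmem z)
      (sub_add_adjoint_sub_eq_zero_of_forall_le (hPmem z) (hPmin z))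
      ((hTdrs z).symm.trans hz).symm
  · rintro ⟨x, y, ν⟩ hw
    exact mem_image_kktToLalFix hf.1 hf.2.2 hg.1 hg.2.2 hproxf hproxg hu.ne'
      (hw.symm.trans (hTlal x y ν))

/-- Corollary 1(a): if `S_p`, `∂f(S_p)`, and
`{ν | -A*ν ∈ ∂f(S_p)} ∩ ∂g(K)` are bounded, then both the fixed point set of the DRS
operator of Type-I and the fixed point set of the LAL operator are bounded. -/
theorem statement16
    {X K : Type*} [NormedAddCommGroup X] [InnerProductSpace ℝ X] [CompleteSpace X]
    [NormedAddCommGroup K] [InnerProductSpace ℝ K] [CompleteSpace K]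
    (f : X → EReal) (g : K → EReal) (hf : Gamma0 f) (hg : Gamma0 g)
    (A : X →L[ℝ] K)
    (Sp : Set X) (hSpdef : Sp = argminSet (fun x => f x + g (A x)))
    (hSp : Sp.Nonempty)
    (hqc : (0 : K) ∈ sriSet (edom g - (fun x => A x) '' edom f))
    (u : ℝ) (hu : 0 < u)
    (hAcheck : ∀ (x : X) (y : K), ‖A x - y‖ ≤ (1 / u) * Real.sqrt (‖x‖ ^ 2 + ‖y‖ ^ 2))
    (hbSp : IsBounded Sp)
    (hbdf : IsBounded (⋃ x ∈ Sp, esubdiff f x))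
    (hbdual : IsBounded
      ({ν : K | -(A.adjoint ν) ∈ ⋃ x ∈ Sp, esubdiff f x} ∩ ⋃ y : K, esubdiff g y))
    (proxf : X → X) (proxg : K → K)
    (hproxf : ∀ x, IsProxPt f x (proxf x)) (hproxg : ∀ y, IsProxPt g y (proxg y))
    (P : X × K → X × K)
    (hPmem : ∀ z : X × K, A (P z).1 = (P z).2)
    (hPmin : ∀ z w : X × K, A w.1 = w.2 →
      ‖z.1 - (P z).1‖ ^ 2 + ‖z.2 - (P z).2‖ ^ 2 ≤ ‖z.1 - w.1‖ ^ 2 + ‖z.2 - w.2‖ ^ 2)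
    (Tdrs : X × K → X × K)
    (hTdrs : ∀ z : X × K, Tdrs z =
      ((2:ℝ) • proxf ((2:ℝ) • P z - z).1 - ((2:ℝ) • P z - z).1,
       (2:ℝ) • proxg ((2:ℝ) • P z - z).2 - ((2:ℝ) • P z - z).2))
    (Tlal : X × K × K → X × K × K)
    (hTlal : ∀ (x : X) (y ν : K), Tlal (x, y, ν) =
      (proxf (x - (u ^ 2) • (A.adjoint (A x) - A.adjoint y) + u • A.adjoint ν),
       proxg (y - (u ^ 2) • (-(A x) + y) - u • ν),
       ν - u • (A (proxf (x - (u ^ 2) • (A.adjoint (A x) - A.adjoint y) + u • A.adjoint ν))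
                 - proxg (y - (u ^ 2) • (-(A x) + y) - u • ν)))) :
    IsBounded {z : X × K | Tdrs z = z} ∧ IsBounded {w : X × K × K | Tlal w = w} :=
  statement16_general f g hf hg A Sp hSpdef u hu hbSp hbdual proxf proxg hproxf hproxg P hPmem hPmin
    Tdrs hTdrs Tlal hTlal
end
end

section
/- Let z ∈ ℝ^N and let X ∈ ℝ^{N×p} be a matrix with no zero column. For j ∈ {1,…,2p}, set x_j := X_{:j} (the j-th column of X) if j ≤ p and x_j := −X_{:j−p} if j > p, and define the linear map M_j : ℝ^p → ℝ × ℝ^N : b ↦ (x_jᵀ X b, X b). Let q > 1, β > 0, and define g_{(j,q)} : ℝ × ℝ^N → (−∞,∞] by g_{(j,q)}(η, y) := ‖y − z‖^q / (β (η − x_jᵀz)^{q−1}) if η > x_jᵀz; g_{(j,q)}(η, y) := 0 if y = z and η = x_jᵀz; and g_{(j,q)}(η, y) := +∞ otherwise. Then for each j ∈ {1,…,2p}, dom(g_{(j,q)}) − M_j(ℝ^p) = ℝ × ℝ^N; in particular, 0 belongs to the relative interior of dom(g_{(j,q)}) − M_j(ℝ^p). -/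
noncomputable section

open Filter Topology Bornology
open scoped InnerProductSpace Pointwise Classical

/-- Relative interior (as in the paper): the points `x ∈ C` such that the cone generated
by `C - x` coincides with the linear span of `C - x`. -/
def riSet {H : Type*} [AddCommGroup H] [Module ℝ H] (C : Set H) : Set H :=
  {x | x ∈ C ∧
    {y | ∃ t : ℝ, 0 < t ∧ ∃ c ∈ C, y = t • (c - x)} =
      ((Submodule.span ℝ ((fun c => c - x) '' C) : Submodule ℝ H) : Set H)}

/-- The vector `x_j`: the `j`-th column of `X` (when `s = true`) or its negative
(when `s = false`); this enumerates `x_1, …, x_{2p}`. -/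
def colv {N p : ℕ} (Xm : Fin N → Fin p → ℝ) (s : Bool) (j : Fin p) : Fin N → ℝ :=
  fun k => if s then Xm k j else -Xm k j

/-- The linear map `M_j : ℝ^p → ℝ × ℝ^N`, `b ↦ (x_jᵀ X b, X b)`. -/
def Mjmap {N p : ℕ} (Xm : Fin N → Fin p → ℝ) (s : Bool) (j : Fin p) :
    (Fin p → ℝ) → ℝ × (Fin N → ℝ) :=
  fun b => (∑ k, colv Xm s j k * (∑ i, Xm k i * b i), fun k => ∑ i, Xm k i * b i)

/-- The function `g_{(j,q)}` from the TREX subproblems. -/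
def gjq {N : ℕ} (z : Fin N → ℝ) (xj : Fin N → ℝ) (q β : ℝ) :
    ℝ × (Fin N → ℝ) → EReal := fun w =>
  if (∑ k, xj k * z k) < w.1 then
    (((Real.sqrt (∑ k, (w.2 k - z k) ^ 2)) ^ q
        / (β * (w.1 - ∑ k, xj k * z k) ^ (q - 1)) : ℝ) : EReal)
  else if w.2 = z ∧ w.1 = ∑ k, xj k * z k then 0
  else ⊤

/-!
The effective domain of `g_{(j,q)}` contains the open half-space `{(η, y) | x_jᵀ z < η}`,
and the first coordinate of `M_j(t e_j)` is `t · x_jᵀ X_{:j} = ± t ‖X_{:j}‖²`, which sweeps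
out all of `ℝ` because the column is nonzero. Translating an arbitrary point by a suitable
`M_j(t e_j)` therefore lands it in the half-space, so `dom g_{(j,q)} - M_j(ℝ^p)` is the whole
space, whose relative interior is itself.
-/

theorem Set.sub_eq_univ_of_halfSpace_subset {α β : Type*} [AddCommGroup α] [Preorder α]
    [NoMaxOrder α] [AddCommGroup β] {D R : Set (α × β)} (c : α)
    (hD : {w | c < w.1} ⊆ D) (hR : ∀ a, ∃ r ∈ R, r.1 = a) : D - R = Set.univ := by
  refine Set.eq_univ_of_forall fun w => ?_
  obtain ⟨c', hc'⟩ := exists_gt c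
  obtain ⟨r, hrR, hr⟩ := hR (c' - w.1)
  refine ⟨w + r, hD ?_, r, hrR, add_sub_cancel_right w r⟩
  simpa [Prod.fst_add, hr] using hc'

theorem mem_riSet_univ {H : Type*} [AddCommGroup H] [Module ℝ H] (x : H) :
    x ∈ riSet (Set.univ : Set H) := by
  refine ⟨trivial, ?_⟩
  have himage : (fun c => c - x) '' (Set.univ : Set H) = Set.univ :=
    Set.eq_univ_of_forall fun y => ⟨y + x, trivial, add_sub_cancel_right y x⟩
  rw [himage, Submodule.span_univ, Submodule.top_coe]
  exact Set.eq_univ_of_forall fun y => ⟨1, one_pos, y + x, trivial, by simp⟩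

theorem halfSpace_subset_edom_gjq {N : ℕ} (z xj : Fin N → ℝ) (q β : ℝ) :
    {w : ℝ × (Fin N → ℝ) | ∑ k, xj k * z k < w.1} ⊆ edom (gjq z xj q β) := by
  intro w (hw : _ < w.1)
  simp only [edom, gjq, Set.mem_ofPred_eq, if_pos hw]
  exact EReal.coe_ne_top _

theorem sum_colv_mul_col_ne_zero {N p : ℕ} {Xm : Fin N → Fin p → ℝ} {j : Fin p}
    (hj : (fun k => Xm k j) ≠ 0) (s : Bool) : ∑ k, colv Xm s j k * Xm k j ≠ 0 := by
  have hpos : 0 < ∑ k, Xm k j ^ 2 := by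
    refine lt_of_le_of_ne (Finset.sum_nonneg fun k _ => sq_nonneg _) fun h => hj ?_
    funext k
    exact pow_eq_zero_iff two_ne_zero |>.mp <|
      (Finset.sum_eq_zero_iff_of_nonneg fun k _ => sq_nonneg _).mp h.symm k (Finset.mem_univ k)
  cases s <;> simp only [colv, Bool.false_eq_true, if_false, if_true, neg_mul,
    Finset.sum_neg_distrib, ← sq] <;> [exact neg_ne_zero.mpr hpos.ne'; exact hpos.ne']

theorem Mjmap_single_fst {N p : ℕ} (Xm : Fin N → Fin p → ℝ) (s : Bool) (j : Fin p) (t : ℝ) :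
    (Mjmap Xm s j (Pi.single j t)).1 = t * ∑ k, colv Xm s j k * Xm k j := by
  simp only [Mjmap, Pi.single_apply, mul_ite, mul_zero, Finset.sum_ite_eq', Finset.mem_univ,
    if_true, Finset.mul_sum]
  exact Finset.sum_congr rfl fun k _ => by ring

theorem exists_Mjmap_fst_eq {N p : ℕ} {Xm : Fin N → Fin p → ℝ} {j : Fin p}
    (hj : (fun k => Xm k j) ≠ 0) (s : Bool) (a : ℝ) :
    ∃ r ∈ Set.range (Mjmap Xm s j), r.1 = a :=
  ⟨_, ⟨Pi.single j (a / ∑ k, colv Xm s j k * Xm k j), rfl⟩, by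
    rw [Mjmap_single_fst, div_mul_cancel₀ a (sum_colv_mul_col_ne_zero hj s)]⟩

theorem statement17_general
    {N p : ℕ} (z : Fin N → ℝ) (Xm : Fin N → Fin p → ℝ)
    (hcol : ∀ j : Fin p, (fun k => Xm k j) ≠ (0 : Fin N → ℝ))
    (q β : ℝ) :
    ∀ (s : Bool) (j : Fin p),
      (edom (gjq z (colv Xm s j) q β) - Set.range (Mjmap Xm s j)
          = (Set.univ : Set (ℝ × (Fin N → ℝ)))) ∧
      (0 : ℝ × (Fin N → ℝ)) ∈
        riSet (edom (gjq z (colv Xm s j) q β) - Set.range (Mjmap Xm s j)) := by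
  intro s j
  have huniv := Set.sub_eq_univ_of_halfSpace_subset _
    (halfSpace_subset_edom_gjq z (colv Xm s j) q β) (exists_Mjmap_fst_eq (hcol j) s)
  exact ⟨huniv, huniv ▸ mem_riSet_univ 0⟩

/-- Lemma 1: qualification condition for the TREX subproblems.
If `X` has no zero column then `dom g_{(j,q)} - M_j(ℝ^p) = ℝ × ℝ^N`; in particular `0`
belongs to the relative interior of `dom g_{(j,q)} - M_j(ℝ^p)`. -/
theorem statement17
    {N p : ℕ} (z : Fin N → ℝ) (Xm : Fin N → Fin p → ℝ)
    (hcol : ∀ j : Fin p, (fun k => Xm k j) ≠ (0 : Fin N → ℝ))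
    (q β : ℝ) (hq : 1 < q) (hβ : 0 < β) :
    ∀ (s : Bool) (j : Fin p),
      (edom (gjq z (colv Xm s j) q β) - Set.range (Mjmap Xm s j)
          = (Set.univ : Set (ℝ × (Fin N → ℝ)))) ∧
      (0 : ℝ × (Fin N → ℝ)) ∈
        riSet (edom (gjq z (colv Xm s j) q β) - Set.range (Mjmap Xm s j)) :=
  statement17_general z Xm hcol q β
end
end

section
/- Let X ∈ ℝ^{N×p} be a matrix with no zero column, and for j ∈ {1,…,2p} set x_j := X_{:j} if j ≤ p and x_j := −X_{:j−p} if j > p, and define M_j : ℝ^p → ℝ × ℝ^N : b ↦ (x_jᵀ X b, X b) with adjoint M_jᵀ : ℝ × ℝ^N → ℝ^p : (η, y) ↦ η Xᵀ x_j + Xᵀ y. Let S ⊂ ℝ^p be a bounded set, and let φ ∈ Γ₀(ℝ^N) be supercoercive such that its Fenchel conjugate φ* is also supercoercive. Let φ̃ : ℝ × ℝ^N → (−∞,∞] be the perspective of φ, defined by φ̃(η, y) := η φ(y/η) if η > 0; φ̃(0, y) := sup_{x ∈ dom(φ)}(φ(x + y) − φ(x)); and φ̃(η, y) := +∞ if η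 < 0. Then for each j ∈ {1,…,2p}, the set {(η, y) ∈ ℝ × ℝ^N : M_jᵀ(η, y) ∈ S} ∩ (⋃_{(η',y') ∈ ℝ × ℝ^N} ∂φ̃(η', y')) is bounded. -/
/-!
The perspective `φ̃` is positively homogeneous with `φ̃(1, ·) = φ`, so testing the subgradient
inequality of `(η, y) ∈ ∂φ̃(w)` along the rays `t ↦ (t, t z)`, `t → ∞`, gives `η + φ*(y) ≤ 0`.
Supercoercivity of `φ*` therefore makes `-η` dominate any multiple of `‖y‖` once `‖y‖` is large.
On the other hand the `j`-th coordinate of `M_jᵀ(η, y)` is `±η ‖x_j‖² + ⟪x_j, y⟫`, which is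
bounded on `S`, so by Cauchy–Schwarz `|η| ‖x_j‖² ≤ B + ‖x_j‖ ‖y‖`. Together these bound `‖y‖`,
and then `|η|`.
-/

noncomputable section

open Filter Topology Bornology
open scoped InnerProductSpace Pointwise Classical

/-- Euclidean norm on `ℝ^N` (written as functions `Fin N → ℝ`). -/
def eunorm {N : ℕ} (y : Fin N → ℝ) : ℝ := Real.sqrt (∑ k, (y k) ^ 2)

/-- Supercoercivity: `φ(y)/‖y‖ → ∞` as `‖y‖ → ∞`. -/
def Supercoercive {N : ℕ} (φ : (Fin N → ℝ) → EReal) : Prop :=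
  ∀ M : ℝ, ∃ R : ℝ, ∀ y : Fin N → ℝ, R ≤ eunorm y → ((M * eunorm y : ℝ) : EReal) ≤ φ y

/-- Fenchel conjugate on `ℝ^N` with the Euclidean inner product. -/
def econjE {N : ℕ} (φ : (Fin N → ℝ) → EReal) (u : Fin N → ℝ) : EReal :=
  ⨆ y : Fin N → ℝ, (((∑ k, y k * u k : ℝ) : EReal) - φ y)

/-- The perspective `φ̃` of `φ`. -/
def pers {N : ℕ} (φ : (Fin N → ℝ) → EReal) : ℝ × (Fin N → ℝ) → EReal := fun w =>
  if 0 < w.1 then (w.1 : EReal) * φ (w.1⁻¹ • w.2)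
  else if w.1 = 0 then ⨆ x ∈ edom φ, (φ (x + w.2) - φ x)
  else ⊤

/-- Subdifferential of a function on `ℝ × ℝ^N` (Euclidean inner product). -/
def esubdiffRN {N : ℕ} (F : ℝ × (Fin N → ℝ) → EReal) (w : ℝ × (Fin N → ℝ)) :
    Set (ℝ × (Fin N → ℝ)) :=
  {v | ∀ r : ℝ × (Fin N → ℝ),
    (((r.1 - w.1) * v.1 + ∑ k, (r.2 k - w.2 k) * v.2 k : ℝ) : EReal) + F w ≤ F r}


section Eunorm

variable {N : ℕ}

lemma sq_eunorm (y : Fin N → ℝ) : eunorm y ^ 2 = ∑ k, y k ^ 2 :=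
  Real.sq_sqrt (Finset.sum_nonneg fun k _ => sq_nonneg (y k))

lemma eunorm_nonneg (y : Fin N → ℝ) : 0 ≤ eunorm y := Real.sqrt_nonneg _

lemma eunorm_pos {y : Fin N → ℝ} (hy : y ≠ 0) : 0 < eunorm y := by
  obtain ⟨k, hk⟩ := Function.ne_iff.mp hy
  refine Real.sqrt_pos.mpr (lt_of_lt_of_le (pow_pos (abs_pos.mpr hk) 2) ?_)
  rw [sq_abs]
  exact Finset.single_le_sum (f := fun k => y k ^ 2) (fun k _ => sq_nonneg (y k))
    (Finset.mem_univ k)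

lemma abs_sum_mul_le_eunorm_mul (x y : Fin N → ℝ) :
    |∑ k, x k * y k| ≤ eunorm x * eunorm y := by
  rw [eunorm, eunorm, ← Real.sqrt_mul (Finset.sum_nonneg fun k _ => sq_nonneg (x k))]
  exact Real.abs_le_sqrt (Finset.sum_mul_sq_le_sq_mul_sq _ x y)

lemma norm_le_eunorm (y : Fin N → ℝ) : ‖y‖ ≤ eunorm y := by
  refine (pi_norm_le_iff_of_nonneg (eunorm_nonneg y)).mpr fun k => ?_
  rw [Real.norm_eq_abs]
  exact Real.abs_le_sqrt (Finset.single_le_sum (f := fun k => y k ^ 2)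
    (fun k _ => sq_nonneg (y k)) (Finset.mem_univ k))

lemma norm_prod_le_max_abs_eunorm (w : ℝ × (Fin N → ℝ)) : ‖w‖ ≤ max |w.1| (eunorm w.2) :=
  max_le_max (le_of_eq (Real.norm_eq_abs _)) (norm_le_eunorm w.2)

end Eunorm

section Perspective

variable {N : ℕ} {φ : (Fin N → ℝ) → EReal}

lemma pers_smul_of_pos {η : ℝ} (hη : 0 < η) (z : Fin N → ℝ) :
    pers φ (η, η • z) = η * φ z := by
  simp [pers, hη, smul_smul, inv_mul_cancel₀ hη.ne']

lemma pers_one_mk (x : Fin N → ℝ) : pers φ (1, x) = φ x := by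
  simpa using pers_smul_of_pos (φ := φ) one_pos x

lemma pers_ne_bot (hφ : EProper φ) (w : ℝ × (Fin N → ℝ)) : pers φ w ≠ ⊥ := by
  obtain ⟨⟨x₀, hx₀⟩, hbot⟩ := hφ
  unfold pers
  split_ifs with hpos hzero
  · exact (EReal.mul_ne_bot _ _).mpr ⟨Or.inl (EReal.coe_ne_bot _), Or.inr (hbot _),
      Or.inl (EReal.coe_ne_top _), Or.inl (EReal.coe_nonneg.mpr hpos.le)⟩
  · refine ne_bot_of_le_ne_bot ?_ (le_iSup₂ (f := fun x (_ : x ∈ edom φ) => φ (x + w.2) - φ x)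
      x₀ hx₀)
    rw [← EReal.coe_toReal hx₀ (hbot x₀)]
    have hne := hbot (x₀ + w.2)
    generalize φ (x₀ + w.2) = a at hne ⊢
    induction a using EReal.rec <;> simp_all [← EReal.coe_sub]
  · simp

variable {v r : ℝ × (Fin N → ℝ)}

lemma pers_ne_top_of_mem_esubdiffRN (hφ : EProper φ) (hv : v ∈ esubdiffRN (pers φ) r) :
    pers φ r ≠ ⊤ := by
  obtain ⟨⟨x₀, hx₀⟩, -⟩ := hφ
  intro htop
  have h := hv (1, x₀)
  rw [htop, EReal.add_top_of_ne_bot (EReal.coe_ne_bot _), top_le_iff, pers_one_mk] at h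
  exact hx₀ h

lemma nonpos_of_forall_pos_mul_le {d C : ℝ} (h : ∀ η : ℝ, 0 < η → η * d ≤ C) : d ≤ 0 := by
  by_contra! hd
  have h₁ := h 1 one_pos
  have h₂ := h ((|C| + 1) / d) (by positivity)
  rw [div_mul_cancel₀ _ hd.ne'] at h₂
  linarith [le_abs_self C]

lemma add_sum_mul_le_of_mem_esubdiffRN_pers (hφ : EProper φ) (hv : v ∈ esubdiffRN (pers φ) r)
    (z : Fin N → ℝ) : ((v.1 + ∑ k, z k * v.2 k : ℝ) : EReal) ≤ φ z := by
  have hr : pers φ r = ((pers φ r).toReal : EReal) :=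
    (EReal.coe_toReal (pers_ne_top_of_mem_esubdiffRN hφ hv) (pers_ne_bot hφ r)).symm
  by_cases hz : φ z = ⊤
  · simp [hz]
  rw [← EReal.coe_toReal hz (hφ.2 z), EReal.coe_le_coe_iff, ← sub_nonpos]
  refine nonpos_of_forall_pos_mul_le (C := r.1 * v.1 + ∑ k, r.2 k * v.2 k - (pers φ r).toReal)
    fun η hη => ?_
  have h := hv (η, η • z)
  rw [pers_smul_of_pos hη, hr, ← EReal.coe_toReal hz (hφ.2 z), ← EReal.coe_mul,
    ← EReal.coe_add, EReal.coe_le_coe_iff] at h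
  have hsum : ∑ k, ((η • z) k - r.2 k) * v.2 k
      = η * ∑ k, z k * v.2 k - ∑ k, r.2 k * v.2 k := by
    simp only [Pi.smul_apply, smul_eq_mul, sub_mul, Finset.sum_sub_distrib, Finset.mul_sum,
      mul_assoc]
  rw [hsum] at h
  linarith

lemma econjE_le_of_mem_esubdiffRN_pers (hφ : EProper φ) (hv : v ∈ esubdiffRN (pers φ) r) :
    econjE φ v.2 ≤ ((-v.1 : ℝ) : EReal) := by
  refine iSup_le fun z => ?_
  have h := add_sum_mul_le_of_mem_esubdiffRN_pers hφ hv z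
  have hne := hφ.2 z
  generalize φ z = a at h hne ⊢
  induction a using EReal.rec with
  | bot => exact absurd rfl hne
  | coe f =>
    rw [EReal.coe_le_coe_iff] at h
    rw [← EReal.coe_sub, EReal.coe_le_coe_iff]
    linarith
  | top => simp

end Perspective

lemma abs_mul_sq_eunorm_le {N : ℕ} {c y : Fin N → ℝ} {η B : ℝ} (s : Bool)
    (h : |η * ∑ k, c k * (if s then c k else -c k) + ∑ k, c k * y k| ≤ B) :
    |η| * eunorm c ^ 2 ≤ B + eunorm c * eunorm y := by
  have hself : |∑ k, c k * (if s then c k else -c k)| = eunorm c ^ 2 := by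
    cases s <;> simp [sq_eunorm, ← sq, Finset.sum_nonneg, sq_nonneg]
  calc |η| * eunorm c ^ 2
      = |(η * ∑ k, c k * (if s then c k else -c k) + ∑ k, c k * y k) - ∑ k, c k * y k| := by
        rw [add_sub_cancel_right, abs_mul, hself]
    _ ≤ B + eunorm c * eunorm y :=
        (abs_sub _ _).trans (add_le_add h (abs_sum_mul_le_eunorm_mul c y))

lemma abs_le_and_le_max_of_coercive {q B R η n : ℝ} (hq : 0 < q)
    (hcoord : |η| * q ^ 2 ≤ B + q * n) (hcoer : R ≤ n → (q + 1) / q ^ 2 * n ≤ -η) :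
    |η| ≤ (B + q * max R B) / q ^ 2 ∧ n ≤ max R B := by
  have hn : n ≤ max R B := by
    rcases le_total n R with hnR | hRn
    · exact hnR.trans (le_max_left R B)
    · have h := (hcoer hRn).trans (neg_le_abs η)
      rw [div_mul_eq_mul_div, div_le_iff₀ (by positivity)] at h
      linarith [le_max_right R B]
  refine ⟨(le_div_iff₀ (by positivity)).mpr ?_, hn⟩
  nlinarith

theorem statement18_general
    {N p : ℕ} (Xm : Fin N → Fin p → ℝ)
    (hcol : ∀ j : Fin p, (fun k => Xm k j) ≠ (0 : Fin N → ℝ))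
    (S : Set (Fin p → ℝ)) (hS : IsBounded S)
    (φ : (Fin N → ℝ) → EReal) (hφ : Gamma0 φ)
    (hscconj : Supercoercive (econjE φ)) :
    ∀ (s : Bool) (j : Fin p),
      IsBounded
        ({w : ℝ × (Fin N → ℝ) |
            (fun i => w.1 * (∑ k, Xm k i * (if s then Xm k j else -Xm k j))
              + ∑ k, Xm k i * w.2 k) ∈ S}
          ∩ ⋃ r : ℝ × (Fin N → ℝ), esubdiffRN (pers φ) r) := by
  intro s j
  obtain ⟨B, hB⟩ := isBounded_iff_forall_norm_le.mp hS
  set q := eunorm fun k => Xm k j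
  have hq : 0 < q := eunorm_pos (hcol j)
  -- the slope `(q + 1) / q²` exceeds the Cauchy–Schwarz slope `1 / q` by `1 / q²`, which leaves
  -- `‖y‖ ≤ B` for large `‖y‖`
  obtain ⟨R, hR⟩ := hscconj ((q + 1) / q ^ 2)
  refine isBounded_iff_forall_norm_le.mpr ⟨max ((B + q * max R B) / q ^ 2) (max R B), ?_⟩
  rintro w ⟨hwS, hwsub⟩
  obtain ⟨r, hr⟩ := Set.mem_iUnion.mp hwsub
  have hcoord : |w.1| * q ^ 2 ≤ B + q * eunorm w.2 :=
    abs_mul_sq_eunorm_le s (by simpa only [Real.norm_eq_abs] using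
      (norm_le_pi_norm _ j).trans (hB _ hwS))
  have hcoer (hRn : R ≤ eunorm w.2) : (q + 1) / q ^ 2 * eunorm w.2 ≤ -w.1 :=
    EReal.coe_le_coe_iff.mp ((hR w.2 hRn).trans (econjE_le_of_mem_esubdiffRN_pers hφ.1 hr))
  obtain ⟨hη, hn⟩ := abs_le_and_le_max_of_coercive hq hcoord hcoer
  exact (norm_prod_le_max_abs_eunorm w).trans (max_le_max hη hn)

/-- Claim 4: if `X` has no zero column, `S ⊂ ℝ^p` is bounded, and
`φ ∈ Γ₀(ℝ^N)` and `φ*` are supercoercive, then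
`(M_jᵀ)⁻¹(S) ∩ ∂φ̃(ℝ × ℝ^N)` is bounded, where `φ̃` is the perspective of `φ` and
`M_jᵀ(η, y) = η Xᵀ x_j + Xᵀ y`. -/
theorem statement18
    {N p : ℕ} (Xm : Fin N → Fin p → ℝ)
    (hcol : ∀ j : Fin p, (fun k => Xm k j) ≠ (0 : Fin N → ℝ))
    (S : Set (Fin p → ℝ)) (hS : IsBounded S)
    (φ : (Fin N → ℝ) → EReal) (hφ : Gamma0 φ)
    (hsc : Supercoercive φ) (hscconj : Supercoercive (econjE φ)) :
    ∀ (s : Bool) (j : Fin p),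
      IsBounded
        ({w : ℝ × (Fin N → ℝ) |
            (fun i => w.1 * (∑ k, Xm k i * (if s then Xm k j else -Xm k j))
              + ∑ k, Xm k i * w.2 k) ∈ S}
          ∩ ⋃ r : ℝ × (Fin N → ℝ), esubdiffRN (pers φ) r) :=
  statement18_general Xm hcol S hS φ hφ hscconj
end
end
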